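/- arXiv:2101.05103 — 4 statements merged into one kernel-verified Lean document; each statement's English description precedes it below -/
import Mathlib

section
/- For every d ∈ ℕ and every α > 0 there exists a constant C > 0, depending only on d and α, such that for all s ≥ 1: s ∫_{[0,1]^d} e^{−α s |x|} dx ≤ C (1 + log s)^{d−1}. -/
open MeasureTheory

/-- The volume `|x| = x^(1) ⋯ x^(d)` of the box `[0,x]` for `x ∈ [0,1]^d`. -/
noncomputable def pvol {d : ℕ} (x : Fin d → ℝ) : ℝ := ∏ j, x j

/-- The unit cube `[0,1]^d`. -/
def cube (d : ℕ) : Set (Fin d → ℝ) := Set.Icc 0 1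

/-- The function `c_{α,s}(y) = s ∫_{[0,1]^d} 1_{x ⪰ y} e^{-α s |x|} dx`. -/
noncomputable def cAS {d : ℕ} (α s : ℝ) (y : Fin d → ℝ) : ℝ :=
  s * ∫ x in cube d,
    Set.indicator {x : Fin d → ℝ | y ≤ x} (fun x => Real.exp (-(α * s * pvol x))) x

/-!
Write `J_d(t) = ∫_{[0,1]^d} e^{-t|x|} dx`. Integrating out the first coordinate gives
`J_{d+1}(t) = ∫_0^1 J_d(ty) dy`, i.e. `t J_{d+1}(t) = ∫_0^t J_d(u) du`. Starting from
`t J_1(t) = 1 - e^{-t} ≤ 1`, induction gives `t J_{d+1}(t) ≤ C (1 + log t)^d` for `t ≥ 1`: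
split `∫_0^t` at `1`, use `J_d ≤ 1` on `[0,1]`, and integrate the bound
`C (1 + log u)^{d-1} / u` on `[1,t]`. The parameter `α` is absorbed by
`1 + log⁺ (α s) ≤ (1 + log⁺ α)(1 + log s)`.
-/

open Real Set intervalIntegral

noncomputable def cubeExpIntegral (d : ℕ) (t : ℝ) : ℝ :=
  ∫ x in cube d, exp (-(t * pvol x))

theorem continuous_pvol (d : ℕ) : Continuous (pvol : (Fin d → ℝ) → ℝ) :=
  continuous_finsetProd _ fun i _ => continuous_apply i

theorem pvol_nonneg_of_mem_cube {d : ℕ} {x : Fin d → ℝ} (hx : x ∈ cube d) : 0 ≤ pvol x :=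
  Finset.prod_nonneg fun j _ => hx.1 j

theorem pvol_cons {d : ℕ} (y : ℝ) (z : Fin d → ℝ) :
    pvol (Fin.cons y z : Fin (d + 1) → ℝ) = y * pvol z :=
  Fin.prod_cons y z

theorem integrableOn_cube_exp_pvol (d : ℕ) (t : ℝ) :
    IntegrableOn (fun x => exp (-(t * pvol x))) (cube d) :=
  (continuous_exp.comp ((continuous_const.mul (continuous_pvol d)).neg)).continuousOn
    |>.integrableOn_compact isCompact_Icc

theorem cubeExpIntegral_le_one {d : ℕ} {t : ℝ} (ht : 0 ≤ t) : cubeExpIntegral d t ≤ 1 := by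
  have hbound : ∀ x ∈ cube d, ‖exp (-(t * pvol x))‖ ≤ 1 := fun x hx => by
    rw [norm_of_nonneg (exp_pos _).le, exp_le_one_iff, neg_nonpos]
    exact mul_nonneg ht (pvol_nonneg_of_mem_cube hx)
  calc cubeExpIntegral d t ≤ ‖cubeExpIntegral d t‖ := le_norm_self _
    _ ≤ 1 * volume.real (cube d) :=
      norm_setIntegral_le_of_norm_le_const isCompact_Icc.measure_lt_top hbound
    _ = 1 := by simp [cube, measureReal_def, Real.volume_Icc_pi]

theorem cubeExpIntegral_antitone (d : ℕ) : Antitone (cubeExpIntegral d) := fun t₁ t₂ h =>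
  setIntegral_mono_on (integrableOn_cube_exp_pvol d t₂) (integrableOn_cube_exp_pvol d t₁)
    measurableSet_Icc fun _ hx => exp_le_exp.2 <| neg_le_neg <|
      mul_le_mul_of_nonneg_right h (pvol_nonneg_of_mem_cube hx)

theorem cubeExpIntegral_zero (t : ℝ) : cubeExpIntegral 0 t = exp (-t) := by
  have hcube : cube 0 = univ := eq_univ_of_forall fun _ => ⟨fun i => i.elim0, fun i => i.elim0⟩
  simp [cubeExpIntegral, hcube, pvol, measureReal_def, volume_pi]

theorem cubeExpIntegral_succ (d : ℕ) (t : ℝ) :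
    cubeExpIntegral (d + 1) t = ∫ y in (0 : ℝ)..1, cubeExpIntegral d (t * y) := by
  set e : ℝ × (Fin d → ℝ) ≃ᵐ (Fin (d + 1) → ℝ) :=
    (MeasurableEquiv.piFinSuccAbove (fun _ => ℝ) 0).symm
  have he : MeasurePreserving e :=
    (volume_preserving_piFinSuccAbove (fun _ : Fin (d + 1) => ℝ) 0).symm _
  have hcube : e ⁻¹' cube (d + 1) = Icc 0 1 ×ˢ cube d :=
    ((Fin.insertNthOrderIso (fun _ => ℝ) 0).preimage_Icc _ _).trans (Icc_prod_eq _ _)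
  rw [cubeExpIntegral, ← he.map_eq, setIntegral_map_equiv, hcube, Measure.volume_eq_prod,
    setIntegral_prod, integral_of_le zero_le_one, integral_Icc_eq_integral_Ioc]
  · refine setIntegral_congr_fun measurableSet_Ioc fun y _ => ?_
    simp [e, cubeExpIntegral, MeasurableEquiv.piFinSuccAbove_symm_apply, Fin.insertNthEquiv,
      Fin.insertNth_zero', pvol_cons, mul_assoc]
  · have := integrableOn_cube_exp_pvol (d + 1) t
    rwa [← he.integrableOn_comp_preimage e.measurableEmbedding, hcube] at this

theorem mul_cubeExpIntegral_succ (d : ℕ) (t : ℝ) :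
    t * cubeExpIntegral (d + 1) t = ∫ u in (0 : ℝ)..t, cubeExpIntegral d u := by
  rw [cubeExpIntegral_succ, ← smul_eq_mul, smul_integral_comp_mul_left]
  simp

theorem mul_cubeExpIntegral_one (t : ℝ) : t * cubeExpIntegral 1 t = 1 - exp (-t) := by
  simp_rw [mul_cubeExpIntegral_succ, cubeExpIntegral_zero, integral_comp_neg, integral_exp]
  simp

theorem integral_add_log_pow_mul_inv (c : ℝ) (k : ℕ) {a b : ℝ} (ha : 0 < a) (hb : 0 < b) :
    ∫ u in a..b, (c + log u) ^ k * u⁻¹ =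
      ((c + log b) ^ (k + 1) - (c + log a) ^ (k + 1)) / (k + 1) := by
  have hpos : ∀ u ∈ uIcc a b, 0 < u := fun u hu => (lt_inf_iff.2 ⟨ha, hb⟩).trans_le hu.1
  rw [← integral_pow]
  exact integral_comp_mul_deriv (g := fun x => x ^ k)
    (fun u hu => ((hasDerivAt_log (hpos u hu).ne').const_add c))
    (continuousOn_inv₀.mono fun u hu => (hpos u hu).ne') (continuous_pow k)

theorem mul_cubeExpIntegral_succ_le {d k : ℕ} {C : ℝ} (hC : 0 ≤ C)
    (h : ∀ u, 1 ≤ u → u * cubeExpIntegral d u ≤ C * (1 + log u) ^ k) {t : ℝ} (ht : 1 ≤ t) :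
    t * cubeExpIntegral (d + 1) t ≤ (1 + C) * (1 + log t) ^ (k + 1) := by
  have hint : ∀ a b : ℝ, IntervalIntegrable (cubeExpIntegral d) volume a b := fun _ _ =>
    (cubeExpIntegral_antitone d).intervalIntegrable
  have hhead : ∫ u in (0 : ℝ)..1, cubeExpIntegral d u ≤ 1 := by
    simpa using integral_mono_on zero_le_one (hint 0 1) intervalIntegrable_const
      fun u hu => cubeExpIntegral_le_one hu.1
  have hmajorant : ContinuousOn (fun u => C * ((1 + log u) ^ k * u⁻¹)) (uIcc 1 t) := by
    have : ∀ u ∈ uIcc 1 t, u ≠ 0 := fun u hu =>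
      (one_pos.trans_le (uIcc_of_le ht ▸ hu).1).ne'
    fun_prop (disch := assumption)
  have htail : ∫ u in (1 : ℝ)..t, cubeExpIntegral d u ≤
      C * (((1 + log t) ^ (k + 1) - 1) / (k + 1)) :=
    calc ∫ u in (1 : ℝ)..t, cubeExpIntegral d u
        ≤ ∫ u in (1 : ℝ)..t, C * ((1 + log u) ^ k * u⁻¹) :=
          integral_mono_on ht (hint 1 t) hmajorant.intervalIntegrable fun u hu => by
            rw [← mul_assoc, ← div_eq_mul_inv, le_div_iff₀ (one_pos.trans_le hu.1), mul_comm]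
            exact h u hu.1
      _ = C * (((1 + log t) ^ (k + 1) - 1) / (k + 1)) := by
          rw [intervalIntegral.integral_const_mul,
            integral_add_log_pow_mul_inv 1 k one_pos (one_pos.trans_le ht)]
          simp
  have hL : 1 ≤ (1 + log t) ^ (k + 1) := one_le_pow₀ (by linarith [log_nonneg ht])
  have hfrac : ((1 + log t) ^ (k + 1) - 1) / (k + 1) ≤ (1 + log t) ^ (k + 1) :=
    (div_le_self (by linarith) (by linarith [k.cast_nonneg (α := ℝ)])).trans (by linarith)
  rw [mul_cubeExpIntegral_succ, ← integral_add_adjacent_intervals (hint 0 1) (hint 1 t)]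
  nlinarith [mul_le_mul_of_nonneg_left hfrac hC]

theorem exists_mul_cubeExpIntegral_le (n : ℕ) :
    ∃ C : ℝ, 1 ≤ C ∧ ∀ t, 1 ≤ t → t * cubeExpIntegral (n + 1) t ≤ C * (1 + log t) ^ n := by
  induction n with
  | zero => exact ⟨1, le_rfl, fun t _ => by simp [mul_cubeExpIntegral_one, (exp_pos _).le]⟩
  | succ n ih =>
    obtain ⟨C, hC, h⟩ := ih
    exact ⟨1 + C, by linarith, fun t ht => mul_cubeExpIntegral_succ_le (by linarith) h ht⟩

theorem exists_mul_cubeExpIntegral_le_posLog (n : ℕ) :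
    ∃ C : ℝ, 1 ≤ C ∧ ∀ t, 0 ≤ t → t * cubeExpIntegral (n + 1) t ≤ C * (1 + log⁺ t) ^ n := by
  obtain ⟨C, hC, h⟩ := exists_mul_cubeExpIntegral_le n
  refine ⟨C, hC, fun t ht => ?_⟩
  rcases le_total 1 t with h1 | h1
  · rw [posLog_eq_log (by rwa [abs_of_nonneg ht])]
    exact h t h1
  · calc t * cubeExpIntegral (n + 1) t ≤ 1 :=
          (mul_le_of_le_one_right ht (cubeExpIntegral_le_one ht)).trans h1
      _ ≤ C * (1 + log⁺ t) ^ n :=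
          one_le_mul_of_one_le_of_one_le hC (one_le_pow₀ (by linarith [posLog_nonneg (x := t)]))

theorem one_add_posLog_mul_le (a : ℝ) {b : ℝ} (hb : 1 ≤ b) :
    1 + log⁺ (a * b) ≤ (1 + log⁺ a) * (1 + log b) := by
  have := posLog_mul (x := a) (y := b)
  rw [posLog_eq_log (x := b) (by rwa [abs_of_nonneg (by linarith)])] at this
  nlinarith [posLog_nonneg (x := a), log_nonneg hb]

/-- For every `d ∈ ℕ` and `α > 0` there exists `C > 0` depending only on `d` and `α`
such that `s ∫_{[0,1]^d} e^{-α s |x|} dx ≤ C (1 + log s)^{d-1}` for all `s ≥ 1`. -/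
theorem stmt2 (d : ℕ) (hd : 1 ≤ d) (α : ℝ) (hα : 0 < α) :
    ∃ C : ℝ, 0 < C ∧ ∀ s : ℝ, 1 ≤ s →
      s * ∫ x in cube d, Real.exp (-(α * s * pvol x)) ≤
        C * (1 + Real.log s) ^ (d - 1) := by
  obtain ⟨n, rfl⟩ := Nat.exists_eq_add_of_le' hd
  obtain ⟨C, hC, h⟩ := exists_mul_cubeExpIntegral_le_posLog n
  have hlogα : 0 < 1 + log⁺ α := by linarith [posLog_nonneg (x := α)]
  refine ⟨C / α * (1 + log⁺ α) ^ n, by positivity, fun s hs => ?_⟩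
  calc s * ∫ x in cube (n + 1), exp (-(α * s * pvol x))
      = α⁻¹ * (α * s * cubeExpIntegral (n + 1) (α * s)) := by
        rw [cubeExpIntegral]; field_simp
    _ ≤ α⁻¹ * (C * (1 + log⁺ (α * s)) ^ n) :=
        mul_le_mul_of_nonneg_left (h _ (by positivity)) (by positivity)
    _ ≤ α⁻¹ * (C * ((1 + log⁺ α) * (1 + log s)) ^ n) := by
        gcongr
        · linarith [posLog_nonneg (x := α * s)]
        · exact one_add_posLog_mul_le α hs
    _ = C / α * (1 + log⁺ α) ^ n * (1 + log s) ^ (n + 1 - 1) := by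
        rw [Nat.add_sub_cancel, mul_pow]; ring
end

section
/- For every d ∈ ℕ there exists a constant D > 0, depending only on d, such that for all α > 0, all s > 0 and all y ∈ [0,1]^d with |y| > 0: c_{α,s}(y) ≤ (D/α) e^{−α s |y|/2} [ 1 + |log(α s |y|)|^{d−1} ]. -/
open MeasureTheory

/-!
Write `t = α s` and `m = |y|`, so that `c_{α,s}(y) = s ∫_{[y,1]} e^{-t|x|} dx`. On `[y,1]` the
product `|x|` of the `k + 1` coordinates has density at most `log (w / m) ^ k / k!` on `[m,1]`, so
the box integral is dominated by `Θ_k(t, m) = ∫_m^1 e^{-tw} log (w / m) ^ k dw`. This is proved by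
peeling off one coordinate at a time: after exchanging the two one-dimensional integrals, the
integral over the new coordinate is an explicit exponential integral, and an integration by parts
in `w` raises the power of the logarithm by one.

Finally, on `[m,1]` we have `log (w / m) ≤ t w + |log (t m)|` and `e^{-tw} ≤ e^{-tm/2} e^{-tw/2}`,
and `e^{-u/2} u^k` is bounded by a multiple of `e^{-u/4}`. This gives
`Θ_k(t, m) ≤ C_k e^{-tm/2} (1 + |log (t m)|^k) / t`.
-/

open Set Real

noncomputable def expLogIntegral (t m : ℝ) (k : ℕ) : ℝ :=
  ∫ w in m..1, exp (-(t * w)) * log (w / m) ^ k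

-- `expTail t u = ∫ v in u..1, exp (-(t * v))`
noncomputable def expTail (t u : ℝ) : ℝ := (exp (-(t * u)) - exp (-t)) / t

lemma pos_of_mem_uIcc {a b w : ℝ} (ha : 0 < a) (hb : 0 < b) (hw : w ∈ uIcc a b) : 0 < w :=
  (lt_min ha hb).trans_le hw.1

lemma continuousOn_log_div_pow (k : ℕ) {m a b : ℝ} (ha : 0 < a) (hb : 0 < b) (hm : 0 < m) :
    ContinuousOn (fun w => log (w / m) ^ k) (uIcc a b) :=
  (continuousOn_log.comp (by fun_prop) fun w hw =>
    div_ne_zero (pos_of_mem_uIcc ha hb hw).ne' hm.ne').pow k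

lemma continuous_expLogIntegral_mul (k : ℕ) (t : ℝ) {m : ℝ} (hm : 0 < m) (hm1 : m ≤ 1) :
    Continuous fun x => expLogIntegral (t * x) m k := by
  -- `max w m` agrees with `w` on `[m, 1]` and keeps the logarithm away from its singularity
  have h : ∀ x, expLogIntegral (t * x) m k =
      ∫ w in m..1, exp (-(t * x * w)) * log (max w m / m) ^ k := fun x =>
    intervalIntegral.integral_congr fun w hw => by
      rw [uIcc_of_le hm1] at hw
      simp only [max_eq_left hw.1]
  simp_rw [h]
  exact intervalIntegral.continuous_parametric_intervalIntegral_of_continuous'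
    ((by fun_prop : Continuous fun p : ℝ × ℝ => exp (-(t * p.1 * p.2))).mul
      ((((continuous_snd.max continuous_const).div_const m).log fun p =>
        (div_pos (hm.trans_le (le_max_right p.2 m)) hm).ne').pow k)) _ _

lemma integral_exp_neg_mul {c : ℝ} (hc : c ≠ 0) (a b : ℝ) :
    ∫ x in a..b, exp (-(c * x)) = (exp (-(c * a)) - exp (-(c * b))) / c := by
  have hderiv : ∀ x ∈ uIcc a b, HasDerivAt (fun x => -exp (-(c * x)) / c) (exp (-(c * x))) x := by
    intro x _
    have h : HasDerivAt (fun x => -exp (-(c * x)) / c) (-(exp (-(c * x)) * -(c * 1)) / c) x :=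
      (((hasDerivAt_id x).const_mul c).neg.exp.neg).div_const c
    convert h using 1
    field_simp
  rw [intervalIntegral.integral_eq_sub_of_hasDerivAt hderiv
    ((by fun_prop : Continuous fun x => exp (-(c * x))).intervalIntegrable _ _)]
  ring

lemma expTail_nonneg {t u : ℝ} (ht : 0 < t) (hu : u ≤ 1) : 0 ≤ expTail t u :=
  div_nonneg (sub_nonneg.mpr (exp_le_exp.mpr (by nlinarith))) ht.le

lemma hasDerivAt_expTail {t : ℝ} (ht : t ≠ 0) (u : ℝ) :
    HasDerivAt (expTail t) (-exp (-(t * u))) u := by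
  have h : HasDerivAt (expTail t) (exp (-(t * u)) * -(t * 1) / t) u :=
    ((((hasDerivAt_id u).const_mul t).neg.exp).sub_const _).div_const t
  convert h using 1
  field_simp

lemma integral_exp_neg_mul_mul_le {t w : ℝ} (ht : 0 < t) (hw : 0 < w) (hw1 : w ≤ 1) (b : ℝ) :
    ∫ x in b..1, exp (-(t * x * w)) ≤ expTail t (b * w) / w := by
  simp_rw [mul_right_comm t _ w]
  rw [integral_exp_neg_mul (mul_pos ht hw).ne', expTail, div_div, mul_one,
    show t * w * b = t * (b * w) by ring]
  have : exp (-t) ≤ exp (-(t * w)) := exp_le_exp.mpr (by nlinarith)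
  exact div_le_div_of_nonneg_right (by linarith) (by positivity)

lemma expLogIntegral_succ (k : ℕ) {t m : ℝ} (ht : t ≠ 0) (hm : 0 < m) :
    expLogIntegral t m (k + 1) = (k + 1) * ∫ w in m..1, log (w / m) ^ k / w * expTail t w := by
  have hv : ∀ w ∈ uIcc m 1, HasDerivAt (fun w => log (w / m) ^ (k + 1))
      ((k + 1) * (log (w / m) ^ k / w)) w := by
    intro w hw
    have hw0 := pos_of_mem_uIcc hm one_pos hw
    have h : HasDerivAt (fun w => log (w / m) ^ (k + 1))
        (↑(k + 1) * log (w / m) ^ (k + 1 - 1) * (1 / m / (w / m))) w :=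
      ((hasDerivAt_id w).div_const m).log (div_ne_zero hw0.ne' hm.ne') |>.pow (k + 1)
    convert h using 1
    rw [Nat.add_sub_cancel]
    push_cast
    field_simp
  -- both boundary terms vanish: `expTail t 1 = 0` and `log (m / m) = 0`
  have hparts := intervalIntegral.integral_mul_deriv_eq_deriv_mul
    (fun u _ => hasDerivAt_expTail ht u) hv
    ((by fun_prop : Continuous fun w => -exp (-(t * w))).intervalIntegrable _ _)
    (((continuousOn_log_div_pow k hm one_pos hm).div continuousOn_id fun w hw =>
      (pos_of_mem_uIcc hm one_pos hw).ne').const_smul ((k : ℝ) + 1) |>.intervalIntegrable)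
  simp only [expTail, mul_one, sub_self, zero_div, zero_mul, div_self hm.ne', log_one,
    zero_pow k.succ_ne_zero, mul_zero, zero_sub, neg_mul, intervalIntegral.integral_neg,
    neg_neg] at hparts
  rw [expLogIntegral, ← hparts, ← intervalIntegral.integral_const_mul]
  congr 1; ext w; simp only [expTail]; ring

lemma integral_expLogIntegral_mul_le (k : ℕ) {t m b : ℝ} (ht : 0 < t) (hm : 0 < m)
    (hm1 : m ≤ 1) :
    ∫ x in b..1, expLogIntegral (t * x) m k ≤
      ∫ w in m..1, log (w / m) ^ k * (expTail t (b * w) / w) := by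
  have hcont : ContinuousOn (Function.uncurry fun x w => exp (-(t * x * w)) * log (w / m) ^ k)
      (uIcc b 1 ×ˢ uIcc m 1) :=
    (by fun_prop : Continuous fun p : ℝ × ℝ => exp (-(t * p.1 * p.2))).continuousOn.mul
      ((continuousOn_log_div_pow k hm one_pos hm).comp continuousOn_snd fun p hp => hp.2)
  unfold expLogIntegral
  rw [intervalIntegral_intervalIntegral_swap ((hcont.integrableOn_compact
    (isCompact_uIcc.prod isCompact_uIcc)).mono_set
    (prod_mono uIoc_subset_uIcc uIoc_subset_uIcc))]
  simp_rw [intervalIntegral.integral_mul_const]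
  have hinner : Continuous fun w => ∫ x in b..1, exp (-(t * x * w)) :=
    intervalIntegral.continuous_parametric_intervalIntegral_of_continuous' (by fun_prop) _ _
  refine intervalIntegral.integral_mono_on hm1
    (hinner.continuousOn.mul (continuousOn_log_div_pow k hm one_pos hm)).intervalIntegrable
    ((continuousOn_log_div_pow k hm one_pos hm).mul ?_).intervalIntegrable fun w hw => ?_
  · exact ContinuousOn.div (by unfold expTail; fun_prop) continuousOn_id fun w hw =>
      (pos_of_mem_uIcc hm one_pos hw).ne'
  · rw [mul_comm]
    gcongr
    · exact pow_nonneg (log_nonneg ((one_le_div hm).mpr hw.1)) k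
    · exact integral_exp_neg_mul_mul_le ht (hm.trans_le hw.1) hw.2 b

lemma integral_log_div_pow_mul_expTail_le (k : ℕ) {t m b : ℝ} (ht : 0 < t) (hm : 0 < m)
    (hm1 : m ≤ 1) (hb : 0 < b) (hb1 : b ≤ 1) :
    ∫ w in m..1, log (w / m) ^ k * (expTail t (b * w) / w) ≤ expLogIntegral t (b * m) (k + 1) := by
  set h : ℝ → ℝ := fun u => log (u / (b * m)) ^ k / u * expTail t u
  have hbm : 0 < b * m := mul_pos hb hm
  have hbmb : b * m ≤ b := mul_le_of_le_one_right hb.le hm1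
  have hh : ContinuousOn h (uIcc (b * m) 1) :=
    ((continuousOn_log_div_pow k hbm one_pos hbm).div continuousOn_id fun u hu =>
      (pos_of_mem_uIcc hbm one_pos hu).ne').mul (by unfold expTail; fun_prop)
  have hh0 : ∀ u ∈ Icc (b * m) 1, 0 ≤ h u := fun u hu =>
    mul_nonneg (div_nonneg (pow_nonneg (log_nonneg ((one_le_div hbm).mpr hu.1)) k)
      (hbm.trans_le hu.1).le) (expTail_nonneg ht hu.2)
  have hsubst : ∫ w in m..1, log (w / m) ^ k * (expTail t (b * w) / w) =
      ∫ u in b * m..b, h u := by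
    have : ∀ w ∈ uIcc m 1, log (w / m) ^ k * (expTail t (b * w) / w) = b * h (b * w) := by
      intro w hw
      have hw0 := pos_of_mem_uIcc hm one_pos hw
      simp only [h, mul_div_mul_left w m hb.ne']
      field_simp
    rw [intervalIntegral.integral_congr this, intervalIntegral.integral_const_mul,
      intervalIntegral.integral_comp_mul_left h hb.ne', smul_eq_mul, mul_one,
      mul_inv_cancel_left₀ hb.ne']
  have hsplit := intervalIntegral.integral_add_adjacent_intervals
    ((hh.mono (uIcc_subset_uIcc_left (mem_uIcc_of_le hbmb hb1))).intervalIntegrable (μ := volume))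
    ((hh.mono (uIcc_subset_uIcc_right (mem_uIcc_of_le hbmb hb1))).intervalIntegrable (μ := volume))
  have htail : 0 ≤ ∫ u in b..1, h u :=
    intervalIntegral.integral_nonneg hb1 fun u hu => hh0 u ⟨hbmb.trans hu.1, hu.2⟩
  have hJ : 0 ≤ ∫ u in b * m..1, h u := intervalIntegral.integral_nonneg (hbmb.trans hb1) hh0
  have hk : (1 : ℝ) ≤ k + 1 := by linarith [k.cast_nonneg (α := ℝ)]
  rw [hsubst, expLogIntegral_succ k ht.ne' hbm]
  calc ∫ u in b * m..b, h u ≤ ∫ u in b * m..1, h u := by linarith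
    _ ≤ (k + 1) * ∫ u in b * m..1, h u := le_mul_of_one_le_left hJ hk

lemma setIntegral_Icc_fin_succ {E : Type*} [NormedAddCommGroup E] [NormedSpace ℝ E] {n : ℕ}
    {a b : Fin (n + 1) → ℝ} {f : (Fin (n + 1) → ℝ) → E} (hf : IntegrableOn f (Icc a b)) :
    ∫ x in Icc a b, f x =
      ∫ x₀ in Icc (a 0) (b 0), ∫ x in Icc (Fin.tail a) (Fin.tail b), f (Fin.cons x₀ x) := by
  set e : ℝ × (Fin n → ℝ) ≃ᵐ (Fin (n + 1) → ℝ) :=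
    (MeasurableEquiv.piFinSuccAbove (fun _ => ℝ) 0).symm
  have hem : MeasurePreserving e :=
    (volume_preserving_piFinSuccAbove (fun _ : Fin (n + 1) => ℝ) 0).symm _
  have hpre : e ⁻¹' Icc a b = Icc (a 0) (b 0) ×ˢ Icc (Fin.tail a) (Fin.tail b) :=
    ((Fin.insertNthOrderIso (fun _ => ℝ) 0).preimage_Icc _ _).trans (Icc_prod_eq _ _)
  rw [← hem.map_eq, setIntegral_map_equiv, hpre, Measure.volume_eq_prod, setIntegral_prod]
  · simp only [e, MeasurableEquiv.piFinSuccAbove_symm_apply, Fin.insertNthEquiv, Equiv.coe_fn_mk,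
      Fin.insertNth_zero']
  · rw [← Measure.volume_eq_prod, ← hpre]
    exact hem.integrableOn_comp_preimage e.measurableEmbedding |>.mpr hf

lemma setIntegral_Icc_exp_neg_mul_prod_succ {n : ℕ} (t : ℝ) (y : Fin (n + 1) → ℝ) :
    ∫ x in Icc y 1, exp (-(t * ∏ i, x i)) =
      ∫ x₀ in Icc (y 0) 1, ∫ x in Icc (Fin.tail y) 1, exp (-(t * x₀ * ∏ i, x i)) := by
  rw [setIntegral_Icc_fin_succ
    ((by fun_prop : Continuous _).continuousOn.integrableOn_compact isCompact_Icc)]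
  simp only [Fin.prod_univ_succ, Fin.cons_zero, Fin.cons_succ, mul_assoc]
  rfl

lemma setIntegral_Icc_exp_neg_mul_prod_le (k : ℕ) {t : ℝ} (ht : 0 < t)
    {y : Fin (k + 1) → ℝ} (hy : ∀ i, 0 < y i) (hy1 : y ≤ 1) :
    ∫ x in Icc y 1, exp (-(t * ∏ i, x i)) ≤ expLogIntegral t (∏ i, y i) k := by
  induction k generalizing t with
  | zero =>
    have hy01 : y 0 ≤ 1 := hy1 0
    rw [setIntegral_Icc_exp_neg_mul_prod_succ]
    simp only [Fin.prod_univ_succ, Finset.univ_eq_empty, Finset.prod_empty, mul_one,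
      setIntegral_const, Real.volume_Icc_pi, measureReal_def, ENNReal.toReal_one, one_smul,
      expLogIntegral, pow_zero]
    rw [integral_Icc_eq_integral_Ioc, ← intervalIntegral.integral_of_le hy01]
  | succ k ih =>
    have hy01 : y 0 ≤ 1 := hy1 0
    have hm : 0 < ∏ i, Fin.tail y i := Finset.prod_pos fun i _ => hy _
    have hm1 : ∏ i, Fin.tail y i ≤ 1 := Finset.prod_le_one (fun i _ => (hy _).le) fun i _ => hy1 _
    rw [setIntegral_Icc_exp_neg_mul_prod_succ, Fin.prod_univ_succ]
    calc ∫ x₀ in Icc (y 0) 1, ∫ x in Icc (Fin.tail y) 1, exp (-(t * x₀ * ∏ i, x i))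
        ≤ ∫ x₀ in Icc (y 0) 1, expLogIntegral (t * x₀) (∏ i, Fin.tail y i) k := by
          refine integral_mono_of_nonneg (ae_of_all _ fun x₀ => setIntegral_nonneg measurableSet_Icc
            fun x _ => (exp_pos _).le) ((continuous_expLogIntegral_mul k t hm hm1).continuousOn
            |>.integrableOn_compact isCompact_Icc) ?_
          refine (ae_restrict_iff' measurableSet_Icc).mpr (ae_of_all _ fun x₀ hx₀ => ?_)
          exact ih (y := Fin.tail y) (mul_pos ht ((hy 0).trans_le hx₀.1)) (fun i => hy _)
            fun i => hy1 _
      _ = ∫ x₀ in y 0..1, expLogIntegral (t * x₀) (∏ i, Fin.tail y i) k := by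
          rw [integral_Icc_eq_integral_Ioc, ← intervalIntegral.integral_of_le hy01]
      _ ≤ ∫ w in (∏ i, Fin.tail y i)..1,
            log (w / ∏ i, Fin.tail y i) ^ k * (expTail t (y 0 * w) / w) :=
          integral_expLogIntegral_mul_le k ht hm hm1
      _ ≤ expLogIntegral t (y 0 * ∏ i, Fin.tail y i) (k + 1) :=
          integral_log_div_pow_mul_expTail_le k ht hm hm1 (hy 0) hy01

lemma exp_neg_half_mul_add_pow_le (k : ℕ) {u B : ℝ} (hu : 0 ≤ u) (hB : 0 ≤ B) :
    exp (-(u / 2)) * (u + B) ^ k ≤ 8 ^ k * k.factorial * (1 + B ^ k) * exp (-(u / 4)) := by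
  set E := exp (-(u / 4))
  have hE0 : 0 ≤ E := (exp_pos _).le
  have hE1 : E ≤ 1 := exp_le_one_iff.mpr (by linarith)
  have hsplit : exp (-(u / 2)) = E * E := by rw [← exp_add]; ring_nf
  have hpow : u ^ k * E ≤ 4 ^ k * k.factorial := by
    have h := pow_div_factorial_le_exp (u / 4) (by positivity) k
    rw [div_pow, div_div, div_le_iff₀ (by positivity)] at h
    calc u ^ k * E ≤ exp (u / 4) * (4 ^ k * k.factorial) * E := by gcongr
      _ = 4 ^ k * k.factorial := by rw [mul_comm, ← mul_assoc, ← exp_add]; simp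
  have hfac : (1 : ℝ) ≤ 4 ^ k * k.factorial := one_le_mul_of_one_le_of_one_le
    (one_le_pow₀ (by norm_num)) (by exact_mod_cast k.factorial_pos)
  have h2k : (2:ℝ) ^ (k - 1) ≤ 2 ^ k := pow_le_pow_right₀ (by norm_num) (Nat.sub_le k 1)
  calc exp (-(u / 2)) * (u + B) ^ k ≤ E * E * (2 ^ (k - 1) * (u ^ k + B ^ k)) := by
        rw [hsplit]; gcongr; exact add_pow_le hu hB k
    _ = E * 2 ^ (k - 1) * (u ^ k * E + B ^ k * E) := by ring
    _ ≤ E * 2 ^ k * (4 ^ k * k.factorial + B ^ k * 1) := by gcongr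
    _ ≤ E * 2 ^ k * (4 ^ k * k.factorial * (1 + B ^ k)) := by
        gcongr; nlinarith [pow_nonneg hB k]
    _ = 8 ^ k * k.factorial * (1 + B ^ k) * E := by
        rw [show (8:ℝ) ^ k = 2 ^ k * 4 ^ k by rw [← mul_pow]; norm_num]; ring

lemma expLogIntegral_le (k : ℕ) {t m : ℝ} (ht : 0 < t) (hm : 0 < m) (hm1 : m ≤ 1) :
    expLogIntegral t m k ≤
      4 * 8 ^ k * k.factorial / t * exp (-(t * m / 2)) * (1 + |log (t * m)| ^ k) := by
  set B := |log (t * m)|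
  set C : ℝ := 8 ^ k * k.factorial * (1 + B ^ k)
  have hpoint : ∀ w ∈ Icc m 1,
      exp (-(t * w)) * log (w / m) ^ k ≤ exp (-(t * m / 2)) * C * exp (-(t / 4 * w)) := by
    rintro w ⟨hmw, -⟩
    have hw : 0 < w := hm.trans_le hmw
    have hlog0 : 0 ≤ log (w / m) := log_nonneg ((one_le_div hm).mpr hmw)
    have hlog : log (w / m) ≤ t * w + B := by
      have h1 : log (w / m) = log (t * w) - log (t * m) := by
        rw [log_mul ht.ne' hw.ne', log_mul ht.ne' hm.ne', log_div hw.ne' hm.ne']; ring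
      have h2 := log_le_sub_one_of_pos (mul_pos ht hw)
      have h3 := neg_le_abs (log (t * m))
      linarith
    have hexp : exp (-(t * w)) ≤ exp (-(t * m / 2)) * exp (-(t * w / 2)) := by
      rw [← exp_add]; gcongr; nlinarith
    calc exp (-(t * w)) * log (w / m) ^ k
        ≤ exp (-(t * m / 2)) * exp (-(t * w / 2)) * (t * w + B) ^ k := by gcongr
      _ = exp (-(t * m / 2)) * (exp (-(t * w / 2)) * (t * w + B) ^ k) := by ring
      _ ≤ exp (-(t * m / 2)) * (C * exp (-(t * w / 4))) := by
        exact mul_le_mul_of_nonneg_left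
          (exp_neg_half_mul_add_pow_le k (by positivity) (abs_nonneg _)) (exp_pos _).le
      _ = exp (-(t * m / 2)) * C * exp (-(t / 4 * w)) := by ring_nf
  calc expLogIntegral t m k
      ≤ ∫ w in m..1, exp (-(t * m / 2)) * C * exp (-(t / 4 * w)) :=
        intervalIntegral.integral_mono_on hm1
          ((by fun_prop : Continuous fun w => exp (-(t * w))).continuousOn.mul
            (continuousOn_log_div_pow k hm one_pos hm)).intervalIntegrable
          ((by fun_prop : Continuous _).intervalIntegrable _ _) hpoint
    _ = exp (-(t * m / 2)) * C * ((exp (-(t / 4 * m)) - exp (-(t / 4 * 1))) / (t / 4)) := by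
        rw [intervalIntegral.integral_const_mul, integral_exp_neg_mul (by positivity)]
    _ ≤ exp (-(t * m / 2)) * C * (1 / (t / 4)) := by
        have h1 : exp (-(t / 4 * m)) ≤ 1 := exp_le_one_iff.mpr (by nlinarith)
        have h2 := exp_pos (-(t / 4 * 1))
        gcongr
        linarith
    _ = 4 * 8 ^ k * k.factorial / t * exp (-(t * m / 2)) * (1 + B ^ k) := by
        simp only [C]; field_simp

lemma cAS_eq_setIntegral_Icc {d : ℕ} (α s : ℝ) {y : Fin d → ℝ} (hy : 0 ≤ y) :
    cAS α s y = s * ∫ x in Icc y 1, exp (-(α * s * pvol x)) := by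
  rw [cAS, cube, show {x | y ≤ x} = Ici y from rfl, setIntegral_indicator measurableSet_Ici]
  congr 3
  ext x
  exact ⟨fun ⟨h01, hyx⟩ => ⟨hyx, h01.2⟩, fun ⟨hyx, hx1⟩ => ⟨⟨hy.trans hyx, hx1⟩, hyx⟩⟩

/-- There is `D > 0` depending only on `d` such that for all `α > 0`, `s > 0` and
`y ∈ [0,1]^d` with `|y| > 0`:
`c_{α,s}(y) ≤ (D/α) e^{-α s |y|/2} (1 + |log(α s |y|)|^{d-1})`. -/
theorem stmt4 (d : ℕ) (hd : 1 ≤ d) :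
    ∃ D : ℝ, 0 < D ∧ ∀ α s : ℝ, 0 < α → 0 < s → ∀ y ∈ cube d, 0 < pvol y →
      cAS α s y ≤
        (D / α) * Real.exp (-(α * s * pvol y / 2)) *
          (1 + |Real.log (α * s * pvol y)| ^ (d - 1)) := by
  obtain ⟨k, rfl⟩ : ∃ k, d = k + 1 := ⟨d - 1, by omega⟩
  refine ⟨4 * 8 ^ k * k.factorial, by positivity, fun α s hα hs y hy hpos => ?_⟩
  have ht : 0 < α * s := mul_pos hα hs
  have hy0 : ∀ i, 0 < y i := fun i =>
    (hy.1 i).lt_of_ne (Finset.prod_ne_zero_iff.mp hpos.ne' i (Finset.mem_univ i)).symm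
  have hm1 : pvol y ≤ 1 := Finset.prod_le_one (fun i _ => hy.1 i) fun i _ => hy.2 i
  rw [cAS_eq_setIntegral_Icc α s hy.1, Nat.add_sub_cancel]
  calc s * ∫ x in Icc y 1, exp (-(α * s * pvol x))
      ≤ s * expLogIntegral (α * s) (pvol y) k :=
        mul_le_mul_of_nonneg_left (setIntegral_Icc_exp_neg_mul_prod_le k ht hy0 hy.2) hs.le
    _ ≤ s * (4 * 8 ^ k * k.factorial / (α * s) * exp (-(α * s * pvol y / 2)) *
          (1 + |log (α * s * pvol y)| ^ k)) := by
        gcongr; exact expLogIntegral_le k ht hpos hm1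
    _ = 4 * 8 ^ k * k.factorial / α * exp (-(α * s * pvol y / 2)) *
          (1 + |log (α * s * pvol y)| ^ k) := by
        field_simp
end

section
/- For every d ∈ ℕ, every α > 0, every s > 0 and every i ∈ ℕ, the identity s ∫_{[0,1]^d} c_{α,s}(x)^i dx = s^{i+1} ∫_{([0,1]^d)^i} |z_1 ∧ ⋯ ∧ z_i| · exp( −α s Σ_{j=1}^{i} |z_j| ) d(z_1,…,z_i) holds. -/
open MeasureTheory

/-!
Expanding `c_{α,s}(x)^i` as an `i`-fold integral turns the left-hand side into an integral
of `e^{-α s Σ_k |z_k|}` over the region `0 ⪯ x ⪯ z_k ⪯ 1` (all `k`). By Fubini, integrate out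
`x` first: it ranges over the box `[0, z_1 ∧ ⋯ ∧ z_i]`, whose volume is `|z_1 ∧ ⋯ ∧ z_i|`.
-/

section Sections

variable {α β E : Type*} [NormedAddCommGroup E] [NormedSpace ℝ E]

theorem integral_indicator_section [MeasurableSpace β] (ν : Measure β) {A : Set α}
    {B : α → Set β} (hB : ∀ x, MeasurableSet (B x)) (f : α × β → E) (x : α) :
    ∫ y, {p : α × β | p.1 ∈ A ∧ p.2 ∈ B p.1}.indicator f (x, y) ∂ν =
      A.indicator (fun x => ∫ y in B x, f (x, y) ∂ν) x := by
  by_cases hx : x ∈ A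
  · rw [Set.indicator_of_mem hx, ← integral_indicator (hB x)]
    congr with y
    by_cases hy : y ∈ B x <;> simp [hx, hy]
  · simp [Set.indicator, hx]

theorem setIntegral_setIntegral_swap_of_sections [MeasurableSpace α] [MeasurableSpace β]
    (μ : Measure α) (ν : Measure β) [SFinite μ] [SFinite ν] {S : Set (α × β)} {A : Set α}
    {B : α → Set β} {C : Set β} {D : β → Set α} (hSAB : S = {p | p.1 ∈ A ∧ p.2 ∈ B p.1})
    (hSCD : S = {p | p.2 ∈ C ∧ p.1 ∈ D p.2}) (hS : MeasurableSet S) (hA : MeasurableSet A)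
    (hB : ∀ x, MeasurableSet (B x)) (hC : MeasurableSet C) (hD : ∀ y, MeasurableSet (D y))
    {f : α × β → E} (hf : IntegrableOn f S (μ.prod ν)) :
    ∫ x in A, ∫ y in B x, f (x, y) ∂ν ∂μ = ∫ y in C, ∫ x in D y, f (x, y) ∂μ ∂ν := by
  have hfS : Integrable (S.indicator f) (μ.prod ν) := (integrable_indicator_iff hS).2 hf
  calc ∫ x in A, ∫ y in B x, f (x, y) ∂ν ∂μ
        = ∫ x, ∫ y, S.indicator f (x, y) ∂ν ∂μ := by
        rw [← integral_indicator hA]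
        congr with x
        rw [hSAB, integral_indicator_section ν hB]
    _ = ∫ y, ∫ x, S.indicator f (x, y) ∂μ ∂ν :=
        integral_integral_swap (f := fun x y => S.indicator f (x, y)) hfS
    _ = ∫ y in C, ∫ x in D y, f (x, y) ∂μ ∂ν := by
        rw [← integral_indicator hC]
        congr with y
        rw [hSCD]
        exact integral_indicator_section (f := f ∘ Prod.swap) μ hD y

end Sections

theorem setIntegral_fintype_prod_eq_pow {ι 𝕜 E : Type*} [Fintype ι] [RCLike 𝕜]
    [MeasurableSpace E] (μ : Measure E) [SigmaFinite μ] (s : Set E) (f : E → 𝕜) :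
    ∫ z in Set.univ.pi (fun _ : ι => s), ∏ k, f (z k) ∂Measure.pi (fun _ => μ) =
      (∫ x in s, f x ∂μ) ^ Fintype.card ι := by
  rw [Measure.restrict_pi_pi, integral_fintype_prod_eq_pow]

section UnitCube

variable {ι κ : Type*} [Fintype ι]

theorem le_iInf_apply_iff [Nonempty ι] {x : κ → ℝ} {z : ι → κ → ℝ} :
    x ≤ (fun j => ⨅ k, z k j) ↔ ∀ k, x ≤ z k := by
  simp only [Pi.le_def, le_ciInf_iff (Set.finite_range _).bddBelow]
  exact forall_comm

theorem mem_Icc_and_mem_Icc_const_iff [Nonempty ι] {x : κ → ℝ} {z : ι → κ → ℝ} :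
    x ∈ Set.Icc 0 1 ∧ z ∈ Set.Icc (Function.const ι x) 1 ↔
      z ∈ Set.Icc 0 1 ∧ x ∈ Set.Icc 0 (fun j => ⨅ k, z k j) := by
  have hconst : Function.const ι x ≤ z ↔ ∀ k, x ≤ z k := Iff.rfl
  simp only [Set.mem_Icc, hconst, le_iInf_apply_iff]
  obtain ⟨k₀⟩ := ‹Nonempty ι›
  constructor
  · rintro ⟨⟨hx0, -⟩, hxz, hz1⟩
    exact ⟨⟨fun k => hx0.trans (hxz k), hz1⟩, hx0, hxz⟩
  · rintro ⟨⟨-, hz1⟩, hx0, hxz⟩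
    exact ⟨⟨hx0, (hxz k₀).trans (hz1 k₀)⟩, hxz, hz1⟩

theorem setIntegral_Icc_setIntegral_Icc_const [Nonempty ι] {d : ℕ} {F : (ι → Fin d → ℝ) → ℝ}
    (hF : IntegrableOn F (Set.Icc 0 1)) :
    ∫ x in Set.Icc (0 : Fin d → ℝ) 1, ∫ z in Set.Icc (Function.const ι x) 1, F z =
      ∫ z in Set.Icc 0 1, pvol (fun j => ⨅ k, z k j) * F z := by
  set S : Set ((Fin d → ℝ) × (ι → Fin d → ℝ)) :=
    {p | p.1 ∈ Set.Icc 0 1 ∧ p.2 ∈ Set.Icc (Function.const ι p.1) 1} with hS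
  have hS' : S = {p | p.2 ∈ Set.Icc 0 1 ∧ p.1 ∈ Set.Icc 0 (fun j => ⨅ k, p.2 k j)} := by
    ext p
    exact mem_Icc_and_mem_Icc_const_iff
  have hSmeas : MeasurableSet S :=
    (measurableSet_Icc.preimage measurable_fst).inter
      ((measurableSet_le (by fun_prop) measurable_snd).inter
        (measurableSet_le measurable_snd measurable_const))
  have hFS : IntegrableOn (fun p => F p.2) S (volume.prod volume) := by
    refine IntegrableOn.mono_set ?_ (t := Set.Icc 0 1 ×ˢ Set.Icc 0 1) fun p hp => ?_
    · have : IsFiniteMeasure (volume.restrict (Set.Icc (0 : Fin d → ℝ) 1)) :=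
        isFiniteMeasure_restrict.2 isCompact_Icc.measure_lt_top.ne
      rw [IntegrableOn, ← Measure.prod_restrict]
      exact hF.comp_snd _
    · exact ⟨hp.1, (mem_Icc_and_mem_Icc_const_iff.1 hp).1⟩
  rw [setIntegral_setIntegral_swap_of_sections volume volume
    (D := fun z => Set.Icc 0 fun j => ⨅ k, z k j) hS hS' hSmeas measurableSet_Icc
    (fun _ => measurableSet_Icc) measurableSet_Icc (fun _ => measurableSet_Icc) hFS]
  refine setIntegral_congr_fun measurableSet_Icc fun z hz => ?_
  have hmeet : (0 : Fin d → ℝ) ≤ fun j => ⨅ k, z k j := le_iInf_apply_iff.2 fun k => hz.1 k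
  change ∫ _ in Set.Icc 0 _, F z = _
  rw [setIntegral_const, smul_eq_mul, measureReal_def, Real.volume_Icc_pi_toReal hmeet]
  simp [pvol]

end UnitCube

theorem cAS_eq_setIntegral {d : ℕ} (α s : ℝ) {y : Fin d → ℝ} (hy : 0 ≤ y) :
    cAS α s y = s * ∫ x in Set.Icc y 1, Real.exp (-(α * s * pvol x)) := by
  have hcube : cube d ∩ {x | y ≤ x} = Set.Icc y 1 := by
    ext x
    exact ⟨fun h => ⟨h.2, h.1.2⟩, fun h => ⟨⟨hy.trans h.1, h.2⟩, h.1⟩⟩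
  rw [cAS, setIntegral_indicator (t := {x | y ≤ x}) measurableSet_Ici, hcube]

theorem cAS_pow {d : ℕ} (α s : ℝ) {y : Fin d → ℝ} (hy : 0 ≤ y) (i : ℕ) :
    cAS α s y ^ i = s ^ i * ∫ z in Set.Icc (Function.const (Fin i) y) 1,
      Real.exp (-(α * s * ∑ k, pvol (z k))) := by
  have hpow := setIntegral_fintype_prod_eq_pow (ι := Fin i) volume (Set.Icc y 1)
    fun x => Real.exp (-(α * s * pvol x))
  rw [Fintype.card_fin, Set.pi_univ_Icc] at hpow
  rw [cAS_eq_setIntegral α s hy, mul_pow, ← hpow]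
  congr with z
  rw [← Real.exp_sum, Finset.mul_sum, Finset.sum_neg_distrib]

theorem stmt6_general (d : ℕ) (α s : ℝ)
    (i : ℕ) (hi : 1 ≤ i) :
    s * ∫ x in cube d, (cAS α s x) ^ i =
      s ^ (i + 1) * ∫ z in Set.Icc (0 : Fin i → Fin d → ℝ) 1,
        pvol (fun j => ⨅ k, z k j) * Real.exp (-(α * s * ∑ k, pvol (z k))) := by
  have : Nonempty (Fin i) := Fin.pos_iff_nonempty.1 hi
  have hF : Continuous fun z : Fin i → Fin d → ℝ =>
      Real.exp (-(α * s * ∑ k, pvol (z k))) := by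
    unfold pvol
    fun_prop
  calc s * ∫ x in cube d, cAS α s x ^ i
      = s * ∫ x in Set.Icc 0 1, s ^ i * ∫ z in Set.Icc (Function.const (Fin i) x) 1,
          Real.exp (-(α * s * ∑ k, pvol (z k))) := by
        congr 1
        exact setIntegral_congr_fun measurableSet_Icc fun x hx => cAS_pow α s hx.1 i
    _ = s ^ (i + 1) * ∫ x in Set.Icc 0 1, ∫ z in Set.Icc (Function.const (Fin i) x) 1,
          Real.exp (-(α * s * ∑ k, pvol (z k))) := by
        rw [integral_const_mul]
        ring
    _ = _ := by rw [setIntegral_Icc_setIntegral_Icc_const hF.integrableOn_Icc]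

/-- The representation
`s ∫_{[0,1]^d} c_{α,s}(x)^i dx
  = s^{i+1} ∫_{([0,1]^d)^i} |z_1 ∧ ⋯ ∧ z_i| e^{-α s Σ_j |z_j|} d(z_1,…,z_i)`. -/
theorem stmt6 (d : ℕ) (hd : 1 ≤ d) (α s : ℝ) (hα : 0 < α) (hs : 0 < s)
    (i : ℕ) (hi : 1 ≤ i) :
    s * ∫ x in cube d, (cAS α s x) ^ i =
      s ^ (i + 1) * ∫ z in Set.Icc (0 : Fin i → Fin d → ℝ) 1,
        pvol (fun j => ⨅ k, z k j) * Real.exp (-(α * s * ∑ k, pvol (z k))) :=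
  stmt6_general d α s i hi
end

section
/- For every d ∈ ℕ, every α > 0 and every integer j ≥ 0 there exists a constant C > 0, depending only on d, α and j, such that for all s ≥ 1: s ∫_{[0,1]^d} e^{−α s |y|} |log(s|y|)|^{j} dy ≤ C (1 + log s)^{d−1}. -/
/-!
Write `ψ(u) = e^{-αu} |log u|^j` and `F_d(σ) = σ ∫_{[0,1]^d} ψ(σ|y|) dy`. Integrating out the
first coordinate and substituting `v = σt` gives `F_{d+1}(σ) = ∫_0^σ F_d(v) / v dv`. By induction,
`F_d(σ) ≲ √σ` for `σ ≤ 1` and `F_d(σ) ≲ (1 + log σ)^{d-1}` for `σ ≥ 1`: the bound `√σ` keeps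
`F_d(v) / v` integrable at `0`, and integrating `(1 + log v)^{d-1} / v` over `[1, σ]` costs one
factor `log σ`. The base case `F_1(σ) = ∫_0^σ ψ` follows from `ψ(u) ≲ u^{-1/2}` on `(0,1]` and
`ψ(u) ≲ u^{-2}` on `[1,∞)`.
-/

open MeasureTheory

open Set Real ENNReal
open scoped Nat

@[fun_prop]
lemma measurable_pvol {d : ℕ} : Measurable (pvol (d := d)) :=
  Finset.measurable_prod _ fun i _ => measurable_pi_apply i

lemma volume_restrict_cube (d : ℕ) :
    volume.restrict (cube d) = Measure.pi fun _ : Fin d => volume.restrict (Icc (0:ℝ) 1) := by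
  rw [cube, ← pi_univ_Icc, volume_pi, Measure.restrict_pi_pi]
  rfl

lemma lintegral_cube_zero (h : ℝ → ℝ≥0∞) : ∫⁻ y in cube 0, h (pvol y) = h 1 := by
  rw [volume_restrict_cube, Measure.pi_of_empty, lintegral_dirac]
  simp [pvol]

lemma lintegral_cube_succ (d : ℕ) {g : ℝ → ℝ≥0∞} (hg : Measurable g) :
    ∫⁻ y in cube (d + 1), g (pvol y) =
      ∫⁻ t in Icc 0 1, ∫⁻ y in cube d, g (t * pvol y) := by
  have hmp := measurePreserving_piFinSuccAbove
    (fun _ : Fin (d + 1) => volume.restrict (Icc (0:ℝ) 1)) 0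
  rw [volume_restrict_cube, volume_restrict_cube, ← hmp.symm.lintegral_comp_emb
    (MeasurableEquiv.measurableEmbedding _), lintegral_prod]
  · simp [pvol, Fin.prod_univ_succ]
  · exact (hg.comp measurable_pvol).comp_aemeasurable
      (MeasurableEquiv.measurable _).aemeasurable

lemma setLIntegral_Ioc_zero_comp_mul_left {σ : ℝ} (hσ : 0 < σ) (h : ℝ → ℝ≥0∞) :
    ENNReal.ofReal σ * ∫⁻ t in Ioc 0 1, h (σ * t) = ∫⁻ v in Ioc 0 σ, h v := by
  have himage : (σ * ·) '' Ioc 0 1 = Ioc 0 σ := by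
    rw [image_mul_left_Ioc hσ, mul_zero, mul_one]
  have hderiv (t : ℝ) : HasDerivWithinAt (σ * ·) σ (Ioc 0 1) t := by
    simpa using ((hasDerivAt_id t).const_mul σ).hasDerivWithinAt
  rw [← himage, lintegral_image_eq_lintegral_abs_deriv_mul measurableSet_Ioc
    (fun t _ => hderiv t) (mul_right_injective₀ hσ.ne').injOn,
    ← lintegral_const_mul' _ _ ofReal_ne_top, abs_of_pos hσ]

lemma ofReal_mul_lintegral_cube_succ (d : ℕ) {g : ℝ → ℝ≥0∞} (hg : Measurable g) {σ : ℝ}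
    (hσ : 0 < σ) :
    ENNReal.ofReal σ * ∫⁻ y in cube (d + 1), g (σ * pvol y) =
      ∫⁻ v in Ioc 0 σ, ∫⁻ y in cube d, g (v * pvol y) := by
  rw [lintegral_cube_succ (g := fun p => g (σ * p)) d (hg.comp (measurable_const_mul σ)),
    ← Measure.restrict_congr_set Ioc_ae_eq_Icc, ← setLIntegral_Ioc_zero_comp_mul_left hσ]
  simp only [mul_assoc]

lemma pow_le_factorial_div_pow_mul_exp {c x : ℝ} (hc : 0 < c) (hx : 0 ≤ x) (n : ℕ) :
    x ^ n ≤ n ! / c ^ n * exp (c * x) := by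
  have h := Real.pow_div_factorial_le_exp _ (mul_nonneg hc.le hx) n
  rw [div_le_iff₀ (by positivity)] at h
  rw [div_mul_eq_mul_div, le_div_iff₀ (by positivity)]
  linarith [mul_pow c x n]

lemma abs_log_pow_le_rpow_neg_half {u : ℝ} (hu : 0 < u) (hu1 : u ≤ 1) (j : ℕ) :
    |log u| ^ j ≤ 2 ^ j * j ! * u ^ (-1/2 : ℝ) := by
  have h := pow_le_factorial_div_pow_mul_exp (by norm_num : (0:ℝ) < 1/2)
    (neg_nonneg.mpr (log_nonpos hu.le hu1)) j
  rw [abs_of_nonpos (log_nonpos hu.le hu1), rpow_def_of_pos hu]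
  convert h using 2
  · rw [one_div, inv_pow, div_inv_eq_mul, mul_comm]
  · ring_nf

lemma exp_neg_mul_mul_pow_le {β u : ℝ} (hβ : 0 < β) (hu : 0 ≤ u) (n : ℕ) :
    exp (-(β * u)) * u ^ n ≤ n ! / β ^ n := by
  have h := mul_le_mul_of_nonneg_left (pow_le_factorial_div_pow_mul_exp hβ hu n)
    (exp_nonneg (-(β * u)))
  rwa [mul_left_comm, ← exp_add, neg_add_cancel, exp_zero, mul_one] at h

noncomputable def expLogPow (β : ℝ) (j : ℕ) (u : ℝ) : ℝ := exp (-(β * u)) * |log u| ^ j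

lemma measurable_expLogPow (β : ℝ) (j : ℕ) : Measurable (expLogPow β j) := by
  unfold expLogPow; fun_prop

lemma expLogPow_le_of_le_one {β u : ℝ} (hβ : 0 ≤ β) (hu : 0 < u) (hu1 : u ≤ 1) (j : ℕ) :
    expLogPow β j u ≤ 2 ^ j * j ! * u ^ (-1/2 : ℝ) := by
  have hexp : exp (-(β * u)) ≤ 1 := exp_le_one_iff.mpr (by nlinarith)
  calc expLogPow β j u ≤ |log u| ^ j := mul_le_of_le_one_left (by positivity) hexp
    _ ≤ 2 ^ j * j ! * u ^ (-1/2 : ℝ) := abs_log_pow_le_rpow_neg_half hu hu1 j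

lemma expLogPow_le_of_one_le {β u : ℝ} (hβ : 0 < β) (hu : 1 ≤ u) (j : ℕ) :
    expLogPow β j u ≤ (j + 2)! / β ^ (j + 2) * u ^ (-2 : ℝ) := by
  have hu0 : 0 < u := one_pos.trans_le hu
  have hlog : |log u| ≤ u := by rw [abs_of_nonneg (log_nonneg hu)]; exact log_le_self hu0.le
  calc expLogPow β j u ≤ exp (-(β * u)) * u ^ j := by unfold expLogPow; gcongr
    _ = exp (-(β * u)) * u ^ (j + 2) * u ^ (-2 : ℝ) := by
        rw [rpow_neg hu0.le, Real.rpow_two, pow_add]; field_simp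
    _ ≤ (j + 2)! / β ^ (j + 2) * u ^ (-2 : ℝ) := by
        gcongr; exact exp_neg_mul_mul_pow_le hβ hu0.le _

lemma setLIntegral_Ioc_ofReal {f : ℝ → ℝ} {a b : ℝ} (hab : a ≤ b)
    (hf : IntervalIntegrable f volume a b) (hnn : ∀ x ∈ Ioc a b, 0 ≤ f x) :
    ∫⁻ x in Ioc a b, ENNReal.ofReal (f x) = ENNReal.ofReal (∫ x in a..b, f x) := by
  rw [intervalIntegral.integral_of_le hab, ofReal_integral_eq_lintegral_ofReal
    ((intervalIntegrable_iff_integrableOn_Ioc_of_le hab).mp hf)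
    ((ae_restrict_iff' measurableSet_Ioc).mpr (.of_forall hnn))]

lemma setLIntegral_Ioc_zero_rpow_neg_half {σ : ℝ} (hσ : 0 ≤ σ) :
    ∫⁻ v in Ioc 0 σ, ENNReal.ofReal (v ^ (-1/2 : ℝ)) = ENNReal.ofReal (2 * √σ) := by
  rw [setLIntegral_Ioc_ofReal hσ (intervalIntegral.intervalIntegrable_rpow' (by norm_num))
    (fun v hv => rpow_nonneg hv.1.le _), integral_rpow (Or.inl (by norm_num)),
    zero_rpow (by norm_num), sqrt_eq_rpow]
  congr 1
  norm_num
  ring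

lemma setLIntegral_Ioc_one_rpow_neg_two_le {σ : ℝ} (hσ : 1 ≤ σ) :
    ∫⁻ v in Ioc 1 σ, ENNReal.ofReal (v ^ (-2 : ℝ)) ≤ 1 := by
  have h0 : (0:ℝ) ∉ uIcc 1 σ := by rw [uIcc_of_le hσ]; exact fun h => by linarith [h.1]
  rw [setLIntegral_Ioc_ofReal hσ (intervalIntegral.intervalIntegrable_rpow (Or.inr h0))
    (fun v hv => rpow_nonneg (zero_le_one.trans hv.1.le) _),
    integral_rpow (Or.inr ⟨by norm_num, h0⟩), ← ofReal_one]
  refine ofReal_le_ofReal ?_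
  norm_num
  linarith [rpow_nonneg (zero_le_one.trans hσ) (-1)]

lemma setLIntegral_Ioc_one_inv {σ : ℝ} (hσ : 1 ≤ σ) :
    ∫⁻ v in Ioc 1 σ, ENNReal.ofReal v⁻¹ = ENNReal.ofReal (log σ) := by
  have hne : ∀ v ∈ uIcc 1 σ, v ≠ 0 := fun v hv => by
    rw [uIcc_of_le hσ] at hv; exact (zero_lt_one.trans_le hv.1).ne'
  rw [setLIntegral_Ioc_ofReal hσ
    (intervalIntegral.intervalIntegrable_inv (f := fun v => v) hne continuousOn_id)
    (fun v hv => inv_nonneg.mpr (zero_le_one.trans hv.1.le)),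
    integral_inv_of_pos one_pos (one_pos.trans_le hσ), div_one]

lemma le_ofReal_div_of_ofReal_mul_le {x : ℝ≥0∞} {v y : ℝ} (hv : 0 < v)
    (h : ENNReal.ofReal v * x ≤ ENNReal.ofReal y) : x ≤ ENNReal.ofReal (y / v) := by
  rwa [ofReal_div_of_pos hv, ENNReal.le_div_iff_mul_le (.inl (by simpa using hv))
    (.inl ofReal_ne_top), mul_comm]

lemma setLIntegral_Ioc_zero_le_of_le_rpow_neg_half {f : ℝ → ℝ≥0∞} {C σ : ℝ} (hC : 0 ≤ C)
    (hσ : 0 ≤ σ) (hf : ∀ v ∈ Ioc 0 σ, f v ≤ ENNReal.ofReal (C * v ^ (-1/2 : ℝ))) :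
    ∫⁻ v in Ioc 0 σ, f v ≤ ENNReal.ofReal (2 * C * √σ) :=
  calc ∫⁻ v in Ioc 0 σ, f v
      ≤ ∫⁻ v in Ioc 0 σ, ENNReal.ofReal C * ENNReal.ofReal (v ^ (-1/2 : ℝ)) :=
        setLIntegral_mono' measurableSet_Ioc fun v hv => (hf v hv).trans_eq (ofReal_mul hC)
    _ = ENNReal.ofReal (2 * C * √σ) := by
        rw [lintegral_const_mul' _ _ ofReal_ne_top, setLIntegral_Ioc_zero_rpow_neg_half hσ,
          ← ofReal_mul hC, mul_left_comm, mul_assoc]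

def LogGrowthBound (C : ℝ) (n : ℕ) (F : ℝ → ℝ≥0∞) : Prop :=
  (∀ σ ∈ Ioc (0:ℝ) 1, F σ ≤ ENNReal.ofReal (C * √σ)) ∧
    ∀ σ, 1 ≤ σ → F σ ≤ ENNReal.ofReal (C * (1 + log σ) ^ n)

namespace LogGrowthBound

variable {C : ℝ} {n : ℕ} {F G : ℝ → ℝ≥0∞}

lemma congr (hF : LogGrowthBound C n F) (hFG : ∀ σ, 0 < σ → F σ = G σ) :
    LogGrowthBound C n G :=
  ⟨fun σ hσ => hFG σ hσ.1 ▸ hF.1 σ hσ,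
    fun σ hσ => hFG σ (one_pos.trans_le hσ) ▸ hF.2 σ hσ⟩

lemma setLIntegral_Ioc_zero {f : ℝ → ℝ≥0∞} (hC : 0 ≤ C)
    (hf : LogGrowthBound C n fun v => ENNReal.ofReal v * f v) :
    LogGrowthBound (3 * C) (n + 1) fun σ => ∫⁻ v in Ioc 0 σ, f v := by
  have hsmall : ∀ σ ∈ Ioc (0:ℝ) 1, ∫⁻ v in Ioc 0 σ, f v ≤ ENNReal.ofReal (2 * C * √σ) := by
    refine fun σ hσ => setLIntegral_Ioc_zero_le_of_le_rpow_neg_half hC hσ.1.le fun v hv => ?_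
    have hv1 : v ∈ Ioc (0:ℝ) 1 := ⟨hv.1, hv.2.trans hσ.2⟩
    convert le_ofReal_div_of_ofReal_mul_le hv.1 (hf.1 v hv1) using 2
    rw [sqrt_eq_rpow, mul_div_assoc, ← rpow_sub_one hv.1.ne']
    norm_num
  refine ⟨fun σ hσ => (hsmall σ hσ).trans (ofReal_le_ofReal ?_), fun σ hσ => ?_⟩
  · nlinarith [sqrt_nonneg σ]
  have hL : 0 ≤ log σ := log_nonneg hσ
  have hP : 1 ≤ (1 + log σ) ^ n := one_le_pow₀ (by linarith)
  have htail : ∫⁻ v in Ioc 1 σ, f v ≤ ENNReal.ofReal (C * (1 + log σ) ^ n * log σ) :=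
    calc ∫⁻ v in Ioc 1 σ, f v
        ≤ ∫⁻ v in Ioc 1 σ, ENNReal.ofReal (C * (1 + log σ) ^ n) * ENNReal.ofReal v⁻¹ := by
          refine setLIntegral_mono' measurableSet_Ioc fun v hv => ?_
          have hv0 : 0 < v := one_pos.trans hv.1
          refine (le_ofReal_div_of_ofReal_mul_le hv0 (hf.2 v hv.1.le)).trans ?_
          rw [div_eq_mul_inv, ← ofReal_mul (by positivity)]
          gcongr
          · linarith [log_nonneg hv.1.le]
          · exact hv.2
      _ = ENNReal.ofReal (C * (1 + log σ) ^ n * log σ) := by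
          rw [lintegral_const_mul' _ _ ofReal_ne_top, setLIntegral_Ioc_one_inv hσ,
            ← ofReal_mul (by positivity)]
  show ∫⁻ v in Ioc 0 σ, f v ≤ _
  rw [← Ioc_union_Ioc_eq_Ioc zero_le_one hσ,
    lintegral_union measurableSet_Ioc (Ioc_disjoint_Ioc_of_le le_rfl)]
  calc _ ≤ ENNReal.ofReal (2 * C * √1) + ENNReal.ofReal (C * (1 + log σ) ^ n * log σ) :=
        add_le_add (hsmall 1 ⟨one_pos, le_rfl⟩) htail
    _ ≤ ENNReal.ofReal (3 * C * (1 + log σ) ^ (n + 1)) := by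
        rw [sqrt_one, ← ofReal_add (by positivity) (by positivity), pow_succ]
        refine ofReal_le_ofReal ?_
        nlinarith [mul_nonneg hC (sub_nonneg.2 hP),
          mul_nonneg (mul_nonneg hC (zero_le_one.trans hP)) hL]

end LogGrowthBound

lemma exists_logGrowthBound_setLIntegral_expLogPow {β : ℝ} (hβ : 0 < β) (j : ℕ) :
    ∃ C, 0 < C ∧
      LogGrowthBound C 0 fun σ => ∫⁻ v in Ioc 0 σ, ENNReal.ofReal (expLogPow β j v) := by
  set c : ℝ := 2 ^ j * j ! + (j + 2)! / β ^ (j + 2)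
  have hc : 0 < c := by positivity
  have hsmall (σ : ℝ) (hσ : σ ∈ Ioc (0:ℝ) 1) :
      ∫⁻ v in Ioc 0 σ, ENNReal.ofReal (expLogPow β j v) ≤ ENNReal.ofReal (2 * c * √σ) := by
    refine setLIntegral_Ioc_zero_le_of_le_rpow_neg_half hc.le hσ.1.le fun v hv => ?_
    refine ofReal_le_ofReal ((expLogPow_le_of_le_one hβ.le hv.1 (hv.2.trans hσ.2) j).trans ?_)
    exact mul_le_mul_of_nonneg_right (le_add_of_nonneg_right (by positivity))
      (rpow_nonneg hv.1.le _)
  refine ⟨3 * c, by positivity, fun σ hσ => (hsmall σ hσ).trans (ofReal_le_ofReal ?_),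
    fun σ hσ => ?_⟩
  · nlinarith [sqrt_nonneg σ]
  have htail : ∫⁻ v in Ioc 1 σ, ENNReal.ofReal (expLogPow β j v) ≤ ENNReal.ofReal c :=
    calc ∫⁻ v in Ioc 1 σ, ENNReal.ofReal (expLogPow β j v)
        ≤ ∫⁻ v in Ioc 1 σ, ENNReal.ofReal c * ENNReal.ofReal (v ^ (-2 : ℝ)) := by
          refine setLIntegral_mono' measurableSet_Ioc fun v hv => ?_
          rw [← ofReal_mul hc.le]
          refine ofReal_le_ofReal ((expLogPow_le_of_one_le hβ hv.1.le j).trans ?_)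
          exact mul_le_mul_of_nonneg_right (le_add_of_nonneg_left (by positivity))
            (rpow_nonneg (zero_le_one.trans hv.1.le) _)
      _ ≤ ENNReal.ofReal c := by
          rw [lintegral_const_mul' _ _ ofReal_ne_top]
          exact mul_le_of_le_one_right' (setLIntegral_Ioc_one_rpow_neg_two_le hσ)
  show ∫⁻ v in Ioc 0 σ, ENNReal.ofReal (expLogPow β j v) ≤ _
  rw [← Ioc_union_Ioc_eq_Ioc zero_le_one hσ,
    lintegral_union measurableSet_Ioc (Ioc_disjoint_Ioc_of_le le_rfl)]
  calc _ ≤ ENNReal.ofReal (2 * c * √1) + ENNReal.ofReal c :=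
        add_le_add (hsmall 1 ⟨one_pos, le_rfl⟩) htail
    _ = ENNReal.ofReal (3 * c * (1 + log σ) ^ 0) := by
        rw [sqrt_one, ← ofReal_add (by positivity) hc.le]
        ring_nf

theorem exists_logGrowthBound_cube {β : ℝ} (hβ : 0 < β) (j n : ℕ) :
    ∃ C, 0 < C ∧ LogGrowthBound C n fun σ =>
      ENNReal.ofReal σ * ∫⁻ y in cube (n + 1), ENNReal.ofReal (expLogPow β j (σ * pvol y)) := by
  have hg : Measurable fun u => ENNReal.ofReal (expLogPow β j u) :=
    ENNReal.measurable_ofReal.comp (measurable_expLogPow β j)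
  induction n with
  | zero =>
    obtain ⟨C, hC, hbound⟩ := exists_logGrowthBound_setLIntegral_expLogPow hβ j
    refine ⟨C, hC, hbound.congr fun σ hσ => ?_⟩
    rw [ofReal_mul_lintegral_cube_succ 0 hg hσ]
    refine setLIntegral_congr_fun measurableSet_Ioc fun v _ => ?_
    rw [lintegral_cube_zero (fun p => ENNReal.ofReal (expLogPow β j (v * p))), mul_one]
  | succ n ih =>
    obtain ⟨C, hC, hbound⟩ := ih
    exact ⟨3 * C, by positivity, (hbound.setLIntegral_Ioc_zero hC.le).congr
      fun σ hσ => (ofReal_mul_lintegral_cube_succ _ hg hσ).symm⟩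

/-- For every `d ∈ ℕ`, `α > 0` and integer `j ≥ 0` there is `C > 0` depending only on
`d`, `α`, `j` with `s ∫_{[0,1]^d} e^{-α s |y|} |log(s|y|)|^j dy ≤ C (1 + log s)^{d-1}`
for all `s ≥ 1`. -/
theorem stmt10 (d : ℕ) (hd : 1 ≤ d) (α : ℝ) (hα : 0 < α) (j : ℕ) :
    ∃ C : ℝ, 0 < C ∧ ∀ s : ℝ, 1 ≤ s →
      s * ∫ y in cube d, Real.exp (-(α * s * pvol y)) * |Real.log (s * pvol y)| ^ j ≤
        C * (1 + Real.log s) ^ (d - 1) := by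
  obtain ⟨n, rfl⟩ : ∃ n, d = n + 1 := ⟨d - 1, by omega⟩
  obtain ⟨C, hC, -, hlarge⟩ := exists_logGrowthBound_cube hα j n
  refine ⟨C, hC, fun s hs => ?_⟩
  have hs0 : 0 ≤ s := zero_le_one.trans hs
  have hintegral : ∫ y in cube (n + 1), exp (-(α * s * pvol y)) * |log (s * pvol y)| ^ j =
      (∫⁻ y in cube (n + 1), ENNReal.ofReal (expLogPow α j (s * pvol y))).toReal := by
    rw [integral_eq_lintegral_of_nonneg_ae (.of_forall fun y => by positivity)
      (Measurable.aestronglyMeasurable (by fun_prop))]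
    simp only [expLogPow, mul_assoc]
  rw [hintegral, Nat.add_sub_cancel]
  have h := toReal_le_of_le_ofReal
    (mul_nonneg hC.le (pow_nonneg (by linarith [log_nonneg hs]) n)) (hlarge s hs)
  rwa [toReal_mul, toReal_ofReal hs0] at h
end
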